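/- arXiv:2402.19293 — 3 statements merged into one kernel-verified Lean document; each statement's English description precedes it below -/
import Mathlib

section
/- (General thermodynamic uncertainty relation, Theorem 1.) For every Hermitian operator G on ℂ^n ⊗ ℂ^n ⊗ ℂ^M, the expectation ⟨G⟩ = ⟨Ψ_T, G Ψ_T⟩, the no-cost baseline Q_G = Re⟨Ψ̃_0, G Ψ_T⟩, the variance Var[G] = ⟨Ψ_T, G² Ψ_T⟩ − ⟨G⟩², and the survival activity Ξ = Tr[ρ (V_0† V_0)^{−1}] − 1 satisfy (⟨G⟩ − Q_G)² ≤ Ξ · Var[G]. -/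
open Matrix Kronecker Finset

noncomputable section

/-- Tensor product of two vectors. -/
def tvec {α β : Type*} (x : α → ℂ) (y : β → ℂ) : α × β → ℂ :=
  fun q => x q.1 * y q.2

/-- Standard basis vector `f_m` of the environment `ℂ^(M+1)`. -/
def stdv (M : ℕ) (m : Fin (M + 1)) : Fin (M + 1) → ℂ :=
  fun k => if k = m then 1 else 0

variable {n M : ℕ}

/-- The final pure state `Ψ_T = ∑_{i,m} √p_i ψ_i ⊗ (V_m ψ_i) ⊗ f_m` of R+S+E. -/
def PsiT (ψ : Fin n → Fin n → ℂ) (p : Fin n → ℝ)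
    (V : Fin (M + 1) → Matrix (Fin n) (Fin n) ℂ) :
    (Fin n × Fin n) × Fin (M + 1) → ℂ :=
  ∑ i, ∑ m, ((Real.sqrt (p i) : ℂ) • tvec (tvec (ψ i) (V m *ᵥ ψ i)) (stdv M m))

/-- The unnormalized vector `Ψ̃_0 = ∑_i √p_i ψ_i ⊗ ((V_0†)⁻¹ ψ_i) ⊗ f_0`. -/
def PsiTilde0 (ψ : Fin n → Fin n → ℂ) (p : Fin n → ℝ)
    (V : Fin (M + 1) → Matrix (Fin n) (Fin n) ℂ) :
    (Fin n × Fin n) × Fin (M + 1) → ℂ :=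
  ∑ i, ((Real.sqrt (p i) : ℂ) • tvec (tvec (ψ i) ((((V 0)ᴴ)⁻¹) *ᵥ ψ i)) (stdv M 0))

/-- The initial density matrix `ρ = ∑_i p_i ψ_i ψ_i†` of the principal system S. -/
def rho (ψ : Fin n → Fin n → ℂ) (p : Fin n → ℝ) : Matrix (Fin n) (Fin n) ℂ :=
  ∑ i, ((p i : ℂ) • vecMulVec (ψ i) (star (ψ i)))

/-- Expectation value `⟨G⟩ = ⟨Ψ, G Ψ⟩` (its real part, which is all of it for Hermitian `G`). -/
def expval {ι : Type*} [Fintype ι] (G : Matrix ι ι ℂ) (Ψ : ι → ℂ) : ℝ :=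
  (star Ψ ⬝ᵥ (G *ᵥ Ψ)).re

/-- Variance `Var[G] = ⟨Ψ, G² Ψ⟩ − ⟨G⟩²`. -/
def variance {ι : Type*} [Fintype ι] (G : Matrix ι ι ℂ) (Ψ : ι → ℂ) : ℝ :=
  expval (G * G) Ψ - (expval G Ψ) ^ 2

/-- The survival activity `Ξ = Tr[ρ (V_0† V_0)⁻¹] − 1`. -/
def survivalActivity (ψ : Fin n → Fin n → ℂ) (p : Fin n → ℝ)
    (V : Fin (M + 1) → Matrix (Fin n) (Fin n) ℂ) : ℝ :=
  ((rho ψ p * ((V 0)ᴴ * V 0)⁻¹).trace).re - 1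

/-- The no-cost baseline `Q_G = Re⟨Ψ̃_0, G Ψ_T⟩`. -/
def noCostBaseline (ψ : Fin n → Fin n → ℂ) (p : Fin n → ℝ)
    (V : Fin (M + 1) → Matrix (Fin n) (Fin n) ℂ)
    (G : Matrix ((Fin n × Fin n) × Fin (M + 1)) ((Fin n × Fin n) × Fin (M + 1)) ℂ) : ℝ :=
  (star (PsiTilde0 ψ p V) ⬝ᵥ (G *ᵥ PsiT ψ p V)).re

/-!
Put `x = Ψ̃₀ - Ψ_T` and `y = (G - ⟨G⟩) Ψ_T`. Both `Ψ_T` and `Ψ̃₀` are dilations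
`∑ᵢₘ √pᵢ ψᵢ ⊗ Wₘψᵢ ⊗ fₘ` (with `W = V` and `W = ((V₀†)⁻¹, 0, …, 0)`), and the overlap of two
dilations is `Tr[ρ ∑ₘ Wₘ† W'ₘ]`. The Kraus relation and `V₀⁻¹ V₀ = 1` give
`⟨Ψ_T, Ψ_T⟩ = ⟨Ψ̃₀, Ψ_T⟩ = 1`, while `⟨Ψ̃₀, Ψ̃₀⟩ = Tr[ρ (V₀† V₀)⁻¹]`. Hence `‖x‖² = Ξ`,
`‖y‖² = Var[G]` and `Re⟨x, y⟩ = Q_G - ⟨G⟩`, so the inequality is Cauchy–Schwarz for `x` and `y`.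
-/

section

variable {ι : Type*} [Fintype ι]

lemma re_star_dotProduct_sq_le (x y : ι → ℂ) :
    (star x ⬝ᵥ y).re ^ 2 ≤ (star x ⬝ᵥ x).re * (star y ⬝ᵥ y).re := by
  set X := WithLp.toLp 2 x
  set Y := WithLp.toLp 2 y
  have hinner : ∀ u v : ι → ℂ, inner ℂ (WithLp.toLp 2 u) (WithLp.toLp 2 v) = star u ⬝ᵥ v :=
    fun u v => by rw [EuclideanSpace.inner_toLp_toLp, dotProduct_comm]
  have hCS : |(star x ⬝ᵥ y).re| ≤ ‖X‖ * ‖Y‖ := by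
    rw [← hinner]; exact (Complex.abs_re_le_norm _).trans (norm_inner_le_norm X Y)
  calc (star x ⬝ᵥ y).re ^ 2 ≤ (‖X‖ * ‖Y‖) ^ 2 := sq_le_sq' (abs_le.mp hCS).1 (abs_le.mp hCS).2
    _ = (star x ⬝ᵥ x).re * (star y ⬝ᵥ y).re := by
      rw [mul_pow, ← hinner, ← hinner, ← inner_self_eq_norm_sq (𝕜 := ℂ),
        ← inner_self_eq_norm_sq (𝕜 := ℂ)]
      rfl

lemma variance_eq_re_star_dotProduct_self {G : Matrix ι ι ℂ} (hG : G.IsHermitian) {Ψ : ι → ℂ}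
    (hΨ : star Ψ ⬝ᵥ Ψ = 1) :
    variance G Ψ
      = (star (G *ᵥ Ψ - (expval G Ψ : ℂ) • Ψ) ⬝ᵥ (G *ᵥ Ψ - (expval G Ψ : ℂ) • Ψ)).re := by
  have hGG : star (G *ᵥ Ψ) ⬝ᵥ (G *ᵥ Ψ) = star Ψ ⬝ᵥ ((G * G) *ᵥ Ψ) := by
    rw [star_mulVec, ← dotProduct_mulVec, mulVec_mulVec, hG.eq]
  have hGΨ : star (G *ᵥ Ψ) ⬝ᵥ Ψ = star Ψ ⬝ᵥ (G *ᵥ Ψ) := by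
    rw [star_mulVec, ← dotProduct_mulVec, hG.eq]
  simp only [star_sub, star_smul, sub_dotProduct, dotProduct_sub, smul_dotProduct,
    dotProduct_smul, hGG, hGΨ, hΨ, smul_eq_mul, mul_one, Complex.star_def, Complex.conj_ofReal]
  simp only [variance, expval, Complex.sub_re, Complex.mul_re, Complex.ofReal_re,
    Complex.ofReal_im]
  ring

theorem sq_expval_sub_re_star_dotProduct_le {G : Matrix ι ι ℂ} (hG : G.IsHermitian)
    {Ψ Φ : ι → ℂ} (hΨ : star Ψ ⬝ᵥ Ψ = 1) (hΦΨ : star Φ ⬝ᵥ Ψ = 1) :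
    (expval G Ψ - (star Φ ⬝ᵥ (G *ᵥ Ψ)).re) ^ 2
      ≤ ((star Φ ⬝ᵥ Φ).re - 1) * variance G Ψ := by
  have hΨΦ : star Ψ ⬝ᵥ Φ = 1 := by rw [star_dotProduct, hΦΨ, star_one]
  have hx : (star (Φ - Ψ) ⬝ᵥ (Φ - Ψ)).re = (star Φ ⬝ᵥ Φ).re - 1 := by
    simp only [star_sub, sub_dotProduct, dotProduct_sub, hΦΨ, hΨΦ, hΨ, Complex.sub_re,
      Complex.one_re]
    ring
  have hxy : (star (Φ - Ψ) ⬝ᵥ (G *ᵥ Ψ - (expval G Ψ : ℂ) • Ψ)).re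
      = (star Φ ⬝ᵥ (G *ᵥ Ψ)).re - expval G Ψ := by
    simp only [star_sub, sub_dotProduct, dotProduct_sub, dotProduct_smul, hΦΨ, hΨ, sub_self,
      smul_zero, sub_zero, Complex.sub_re]
    rfl
  rw [variance_eq_re_star_dotProduct_self hG hΨ, ← hx, sub_sq_comm, ← hxy]
  exact re_star_dotProduct_sq_le _ _

end

lemma star_tvec_dotProduct_tvec {α β : Type*} [Fintype α] [Fintype β] (x x' : α → ℂ)
    (y y' : β → ℂ) :
    star (tvec x y) ⬝ᵥ tvec x' y' = (star x ⬝ᵥ x') * (star y ⬝ᵥ y') := by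
  simp only [tvec, dotProduct, Pi.star_apply, StarMul.star_mul, Fintype.sum_prod_type,
    Finset.sum_mul, Finset.mul_sum]
  rw [Finset.sum_comm]
  exact Finset.sum_congr rfl fun a _ => Finset.sum_congr rfl fun b _ => by ring

lemma star_stdv_dotProduct_stdv (M : ℕ) (m m' : Fin (M + 1)) :
    star (stdv M m) ⬝ᵥ stdv M m' = if m = m' then 1 else 0 := by
  simp [stdv, dotProduct, apply_ite, eq_comm]

lemma trace_rho_mul (ψ : Fin n → Fin n → ℂ) (p : Fin n → ℝ) (A : Matrix (Fin n) (Fin n) ℂ) :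
    (rho ψ p * A).trace = ∑ i, (p i : ℂ) * (star (ψ i) ⬝ᵥ (A *ᵥ ψ i)) := by
  simp only [rho, Matrix.sum_mul, trace_sum, smul_mul, trace_smul, vecMulVec_mul,
    trace_vecMulVec, smul_eq_mul]
  simp only [dotProduct_comm (ψ _), dotProduct_mulVec]

lemma trace_rho {ψ : Fin n → Fin n → ℂ}
    (hortho : ∀ i j, star (ψ i) ⬝ᵥ ψ j = if i = j then (1 : ℂ) else 0)
    {p : Fin n → ℝ} (hp1 : ∑ i, p i = 1) :
    (rho ψ p).trace = 1 := by
  rw [← mul_one (rho ψ p), trace_rho_mul]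
  simp [hortho, ← Complex.ofReal_sum, hp1]

def dilation (ψ : Fin n → Fin n → ℂ) (p : Fin n → ℝ)
    (W : Fin (M + 1) → Matrix (Fin n) (Fin n) ℂ) :
    (Fin n × Fin n) × Fin (M + 1) → ℂ :=
  ∑ i, ∑ m, ((Real.sqrt (p i) : ℂ) • tvec (tvec (ψ i) (W m *ᵥ ψ i)) (stdv M m))

lemma PsiT_eq_dilation (ψ : Fin n → Fin n → ℂ) (p : Fin n → ℝ)
    (V : Fin (M + 1) → Matrix (Fin n) (Fin n) ℂ) :
    PsiT ψ p V = dilation ψ p V := rfl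

lemma PsiTilde0_eq_dilation (ψ : Fin n → Fin n → ℂ) (p : Fin n → ℝ)
    (V : Fin (M + 1) → Matrix (Fin n) (Fin n) ℂ) :
    PsiTilde0 ψ p V = dilation ψ p (Pi.single 0 ((V 0)ᴴ)⁻¹) := by
  refine Finset.sum_congr rfl fun i _ => ?_
  rw [Fintype.sum_eq_single 0 fun m hm => by ext; simp [hm, tvec], Pi.single_eq_same]

lemma star_dilation_dotProduct_dilation {ψ : Fin n → Fin n → ℂ}
    (hortho : ∀ i j, star (ψ i) ⬝ᵥ ψ j = if i = j then (1 : ℂ) else 0)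
    {p : Fin n → ℝ} (hp : ∀ i, 0 ≤ p i) (W W' : Fin (M + 1) → Matrix (Fin n) (Fin n) ℂ) :
    star (dilation ψ p W) ⬝ᵥ dilation ψ p W' = (rho ψ p * ∑ m, (W m)ᴴ * W' m).trace := by
  simp only [dilation, star_sum, star_smul, sum_dotProduct, dotProduct_sum, smul_dotProduct,
    dotProduct_smul, star_tvec_dotProduct_tvec, star_stdv_dotProduct_stdv, hortho]
  simp only [smul_eq_mul, ite_mul, one_mul, zero_mul, mul_ite, mul_one, mul_zero,
    Finset.sum_ite_eq', Finset.mem_univ, if_true, Complex.star_def, Complex.conj_ofReal]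
  rw [trace_rho_mul]
  refine Finset.sum_congr rfl fun i _ => ?_
  rw [sum_mulVec, dotProduct_sum, Finset.mul_sum]
  refine Finset.sum_congr rfl fun m _ => ?_
  rw [← mul_assoc, ← Complex.ofReal_mul, Real.mul_self_sqrt (hp i), star_mulVec,
    ← dotProduct_mulVec, mulVec_mulVec]

lemma star_dilation_single_dotProduct_dilation {ψ : Fin n → Fin n → ℂ}
    (hortho : ∀ i j, star (ψ i) ⬝ᵥ ψ j = if i = j then (1 : ℂ) else 0)
    {p : Fin n → ℝ} (hp : ∀ i, 0 ≤ p i) (A : Matrix (Fin n) (Fin n) ℂ)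
    (W : Fin (M + 1) → Matrix (Fin n) (Fin n) ℂ) :
    star (dilation ψ p (Pi.single 0 A)) ⬝ᵥ dilation ψ p W = (rho ψ p * (Aᴴ * W 0)).trace := by
  rw [star_dilation_dotProduct_dilation hortho hp,
    Fintype.sum_eq_single 0 fun m hm => by simp [hm], Pi.single_eq_same]

/-- **General thermodynamic uncertainty relation (Theorem 1).** -/
theorem general_TUR
    (ψ : Fin n → Fin n → ℂ)
    (hortho : ∀ i j, star (ψ i) ⬝ᵥ ψ j = if i = j then (1 : ℂ) else 0)
    (p : Fin n → ℝ) (hp : ∀ i, 0 ≤ p i) (hp1 : ∑ i, p i = 1)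
    (V : Fin (M + 1) → Matrix (Fin n) (Fin n) ℂ)
    (hKraus : ∑ m, (V m)ᴴ * V m = 1)
    (hV0 : IsUnit (V 0))
    (G : Matrix ((Fin n × Fin n) × Fin (M + 1)) ((Fin n × Fin n) × Fin (M + 1)) ℂ)
    (hG : G.IsHermitian) :
    (expval G (PsiT ψ p V) - noCostBaseline ψ p V G) ^ 2
      ≤ survivalActivity ψ p V * variance G (PsiT ψ p V) := by
  have hΨ : star (PsiT ψ p V) ⬝ᵥ PsiT ψ p V = 1 := by
    rw [PsiT_eq_dilation, star_dilation_dotProduct_dilation hortho hp, hKraus, mul_one,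
      trace_rho hortho hp1]
  have hV0inv : ((V 0)ᴴ)⁻¹ᴴ = (V 0)⁻¹ := by
    rw [conjTranspose_nonsing_inv, conjTranspose_conjTranspose]
  have hΦΨ : star (PsiTilde0 ψ p V) ⬝ᵥ PsiT ψ p V = 1 := by
    rw [PsiTilde0_eq_dilation, PsiT_eq_dilation, star_dilation_single_dotProduct_dilation hortho hp,
      hV0inv, nonsing_inv_mul _ ((isUnit_iff_isUnit_det _).mp hV0), mul_one, trace_rho hortho hp1]
  have hΦ : star (PsiTilde0 ψ p V) ⬝ᵥ PsiTilde0 ψ p V = (rho ψ p * ((V 0)ᴴ * V 0)⁻¹).trace := by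
    rw [PsiTilde0_eq_dilation, star_dilation_single_dotProduct_dilation hortho hp,
      Pi.single_eq_same, hV0inv, Matrix.mul_inv_rev]
  rw [noCostBaseline, survivalActivity, ← hΦ]
  exact sq_expval_sub_re_star_dotProduct_le hG hΨ hΦΨ
end
end

section
/- (Ancilla protocol measures the time correlator under TPCP dynamics.) Let ρ_f = U_A^c (∑_m (I_2 ⊗ V_m) σ (I_2 ⊗ V_m†)) (U_A^c)†. Then Tr[(σ_x ⊗ I_n) ρ_f] = Re Tr[ρ A(T) B] and Tr[(σ_y ⊗ I_n) ρ_f] = Im Tr[ρ A(T) B], where A(T) = ∑_m V_m† A V_m and σ_x, σ_y are the Pauli matrices on the ancilla qubit. -/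
open Matrix Kronecker Finset
open scoped ComplexOrder

noncomputable section

variable {n M : ℕ}

/-- The controlled unitary `E_00 ⊗ I + E_11 ⊗ A` on the qubit ancilla S′ and the system S. -/
def ctrlU (A : Matrix (Fin n) (Fin n) ℂ) : Matrix (Fin 2 × Fin n) (Fin 2 × Fin n) ℂ :=
  Matrix.single (0 : Fin 2) (0 : Fin 2) (1 : ℂ) ⊗ₖ (1 : Matrix (Fin n) (Fin n) ℂ) +
    Matrix.single (1 : Fin 2) (1 : Fin 2) (1 : ℂ) ⊗ₖ A

/-- The ancilla state `|+⟩ = (e_0 + e_1)/√2`. -/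
def plusVec : Fin 2 → ℂ := fun _ => 1 / (Real.sqrt 2 : ℂ)

/-- Pauli `σ_x`. -/
def pauliX : Matrix (Fin 2) (Fin 2) ℂ := !![0, 1; 1, 0]

/-- Pauli `σ_y`. -/
def pauliY : Matrix (Fin 2) (Fin 2) ℂ := !![0, -Complex.I; Complex.I, 0]

/-- The initial state `ρ_{S′S} = |+⟩⟨+| ⊗ ρ` of the ancilla plus system. -/
def rhoSS (ρ : Matrix (Fin n) (Fin n) ℂ) : Matrix (Fin 2 × Fin n) (Fin 2 × Fin n) ℂ :=
  vecMulVec plusVec (star plusVec) ⊗ₖ ρ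

/-- The state `σ = U_B^c ρ_{S′S} (U_B^c)†`. -/
def sigmaB (ρ B : Matrix (Fin n) (Fin n) ℂ) : Matrix (Fin 2 × Fin n) (Fin 2 × Fin n) ℂ :=
  ctrlU B * rhoSS ρ * (ctrlU B)ᴴ

/-- Partial trace over the ancilla qubit. -/
def ptrQubit (σ : Matrix (Fin 2 × Fin n) (Fin 2 × Fin n) ℂ) : Matrix (Fin n) (Fin n) ℂ :=
  Matrix.of fun a b => ∑ s : Fin 2, σ (s, a) (s, b)

/-- The reduced state `ρ_S^B = Tr_{S′}[σ]`. -/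
def rhoSB (ρ B : Matrix (Fin n) (Fin n) ℂ) : Matrix (Fin n) (Fin n) ℂ :=
  ptrQubit (sigmaB ρ B)

/-- Heisenberg evolution `A(T) = ∑_m V_m† A V_m`. -/
def heisenberg (V : Fin (M + 1) → Matrix (Fin n) (Fin n) ℂ)
    (A : Matrix (Fin n) (Fin n) ℂ) : Matrix (Fin n) (Fin n) ℂ :=
  ∑ m, (V m)ᴴ * A * V m

/-- The final state `ρ_f = U_A^c (∑_m (I_2 ⊗ V_m) σ (I_2 ⊗ V_m†)) (U_A^c)†` of the protocol. -/
def rhoF (ρ A B : Matrix (Fin n) (Fin n) ℂ)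
    (V : Fin (M + 1) → Matrix (Fin n) (Fin n) ℂ) :
    Matrix (Fin 2 × Fin n) (Fin 2 × Fin n) ℂ :=
  ctrlU A *
    (∑ m, ((1 : Matrix (Fin 2) (Fin 2) ℂ) ⊗ₖ V m) * sigmaB ρ B *
      ((1 : Matrix (Fin 2) (Fin 2) ℂ) ⊗ₖ (V m)ᴴ)) *
    (ctrlU A)ᴴ

/-!
Split `ℂ² ⊗ ℂⁿ` into 2×2 blocks along the ancilla. The controlled unitaries are `diag(1, C)` and
the Kraus operators act as `diag(V_m, V_m)`, so with `Φ X = ∑ V_m X V_m†` the off-diagonal blocks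
of `ρ_f` are `½ Φ(ρB) A` and `½ A Φ(Bρ)`. By the duality `Tr[C Φ(X)] = Tr[C(T) X]` and the
hermiticity of `ρ`, `A`, `B`, their traces are `½ z̄` and `½ z` for `z = Tr[ρ A(T) B]`; `σ_x` and
`σ_y` read off `(z + z̄)/2 = Re z` and `i (z̄ - z)/2 = Im z`.
-/

namespace Matrix

variable {I J K L R : Type*}

theorem trace_comp [Fintype I] [Fintype K] [AddCommMonoid R] (M : Matrix I I (Matrix K K R)) :
    (comp I I K K R M).trace = ∑ i, (M i i).trace := by
  simp [trace, Fintype.sum_prod_type]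

theorem kronecker_eq_comp [Mul R] (P : Matrix I J R) (Q : Matrix K L R) :
    P ⊗ₖ Q = comp I J K L R (of fun i j => P i j • Q) :=
  rfl

end Matrix

/-- `blocks X` is the operator on `ℂ² ⊗ ℂⁿ` whose block `(a, b)` along the ancilla is `X a b`. -/
local notation "blocks" => Matrix.comp (Fin 2) (Fin 2) (Fin _) (Fin _) ℂ

lemma blocks_mul (X Y : Matrix (Fin 2) (Fin 2) (Matrix (Fin n) (Fin n) ℂ)) :
    blocks X * blocks Y = blocks (X * Y) :=
  ((compRingEquiv (Fin 2) (Fin n) ℂ).map_mul X Y).symm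

lemma sum_blocks {ι : Type*} (s : Finset ι)
    (X : ι → Matrix (Fin 2) (Fin 2) (Matrix (Fin n) (Fin n) ℂ)) :
    ∑ i ∈ s, blocks (X i) = blocks (∑ i ∈ s, X i) :=
  (map_sum (compAddEquiv (Fin 2) (Fin 2) (Fin n) (Fin n) ℂ) X s).symm

lemma ctrlU_eq_blocks (C : Matrix (Fin n) (Fin n) ℂ) : ctrlU C = blocks !![1, 0; 0, C] := by
  ext ⟨a, i⟩ ⟨b, j⟩
  fin_cases a <;> fin_cases b <;> simp [ctrlU, Matrix.single, Matrix.kroneckerMap_apply]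

lemma conjTranspose_ctrlU (C : Matrix (Fin n) (Fin n) ℂ) : (ctrlU C)ᴴ = ctrlU Cᴴ := by
  simp [ctrlU, conjTranspose_kronecker]

lemma one_kronecker_eq_blocks (W : Matrix (Fin n) (Fin n) ℂ) :
    (1 : Matrix (Fin 2) (Fin 2) ℂ) ⊗ₖ W = blocks !![W, 0; 0, W] := by
  rw [kronecker_eq_comp]
  congr 1
  ext a b
  fin_cases a <;> fin_cases b <;> simp

lemma rhoSS_eq_blocks (ρ : Matrix (Fin n) (Fin n) ℂ) :
    rhoSS ρ = blocks (of fun _ _ => (2 : ℂ)⁻¹ • ρ) := by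
  have h2 : ((Real.sqrt 2 : ℂ))⁻¹ * ((Real.sqrt 2 : ℂ))⁻¹ = (2 : ℂ)⁻¹ := by
    rw [← mul_inv, ← Complex.ofReal_mul, Real.mul_self_sqrt (by norm_num)]; norm_num
  ext ⟨a, i⟩ ⟨b, j⟩
  simp [rhoSS, Matrix.kroneckerMap_apply, vecMulVec_apply, plusVec, h2]

lemma ctrlU_mul_blocks_mul_conjTranspose {C : Matrix (Fin n) (Fin n) ℂ} (hC : Cᴴ = C)
    (X : Matrix (Fin 2) (Fin 2) (Matrix (Fin n) (Fin n) ℂ)) :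
    ctrlU C * blocks X * (ctrlU C)ᴴ =
      blocks !![X 0 0, X 0 1 * C; C * X 1 0, C * X 1 1 * C] := by
  rw [conjTranspose_ctrlU, hC, ctrlU_eq_blocks, blocks_mul, blocks_mul, eta_fin_two X]
  simp

def krausMap (V : Fin (M + 1) → Matrix (Fin n) (Fin n) ℂ) (X : Matrix (Fin n) (Fin n) ℂ) :
    Matrix (Fin n) (Fin n) ℂ :=
  ∑ m, V m * X * (V m)ᴴ

lemma trace_mul_krausMap (V : Fin (M + 1) → Matrix (Fin n) (Fin n) ℂ)
    (C X : Matrix (Fin n) (Fin n) ℂ) :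
    (C * krausMap V X).trace = (heisenberg V C * X).trace := by
  simp only [krausMap, heisenberg, Matrix.mul_sum, Matrix.sum_mul, trace_sum]
  refine Finset.sum_congr rfl fun m _ => ?_
  rw [← Matrix.mul_assoc, ← Matrix.mul_assoc, trace_mul_comm, ← Matrix.mul_assoc,
    ← Matrix.mul_assoc]

lemma sum_one_kronecker_mul_blocks_mul (V : Fin (M + 1) → Matrix (Fin n) (Fin n) ℂ)
    (X : Matrix (Fin 2) (Fin 2) (Matrix (Fin n) (Fin n) ℂ)) :
    ∑ m, ((1 : Matrix (Fin 2) (Fin 2) ℂ) ⊗ₖ V m) * blocks X *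
        ((1 : Matrix (Fin 2) (Fin 2) ℂ) ⊗ₖ (V m)ᴴ) = blocks (X.map (krausMap V)) := by
  simp only [one_kronecker_eq_blocks, blocks_mul, sum_blocks]
  congr 1
  ext a b : 2
  rw [eta_fin_two X]
  fin_cases a <;> fin_cases b <;> simp [krausMap, Matrix.sum_apply]

lemma trace_pauliX_kronecker_one_mul_blocks
    (X : Matrix (Fin 2) (Fin 2) (Matrix (Fin n) (Fin n) ℂ)) :
    ((pauliX ⊗ₖ (1 : Matrix (Fin n) (Fin n) ℂ)) * blocks X).trace =
      (X 0 1).trace + (X 1 0).trace := by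
  rw [kronecker_eq_comp, blocks_mul, trace_comp]
  simp [pauliX, Matrix.mul_apply, Fin.sum_univ_two, add_comm]

lemma trace_pauliY_kronecker_one_mul_blocks
    (X : Matrix (Fin 2) (Fin 2) (Matrix (Fin n) (Fin n) ℂ)) :
    ((pauliY ⊗ₖ (1 : Matrix (Fin n) (Fin n) ℂ)) * blocks X).trace =
      Complex.I * (X 0 1).trace - Complex.I * (X 1 0).trace := by
  rw [kronecker_eq_comp, blocks_mul, trace_comp]
  simp [pauliY, Matrix.mul_apply, Fin.sum_univ_two, trace_smul]
  ring

lemma isHermitian_heisenberg (V : Fin (M + 1) → Matrix (Fin n) (Fin n) ℂ)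
    {C : Matrix (Fin n) (Fin n) ℂ} (hC : C.IsHermitian) : (heisenberg V C).IsHermitian := by
  simp [heisenberg, IsHermitian, conjTranspose_sum, hC.eq, Matrix.mul_assoc]

lemma rhoF_eq_blocks {A B : Matrix (Fin n) (Fin n) ℂ} (hA : Aᴴ = A) (hB : Bᴴ = B)
    (ρ : Matrix (Fin n) (Fin n) ℂ) (V : Fin (M + 1) → Matrix (Fin n) (Fin n) ℂ) :
    let ρ' := (2 : ℂ)⁻¹ • ρ
    rhoF ρ A B V = blocks !![krausMap V ρ', krausMap V (ρ' * B) * A;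
      A * krausMap V (B * ρ'), A * krausMap V (B * ρ' * B) * A] := by
  rw [rhoF, sigmaB, rhoSS_eq_blocks, ctrlU_mul_blocks_mul_conjTranspose hB,
    sum_one_kronecker_mul_blocks_mul, ctrlU_mul_blocks_mul_conjTranspose hA]
  simp

theorem ancilla_protocol_measures_correlator_general
    (ρ : Matrix (Fin n) (Fin n) ℂ) (hρ : ρ.PosSemidef)
    (A B : Matrix (Fin n) (Fin n) ℂ)
    (hA : A.IsHermitian)
    (hB : B.IsHermitian)
    (V : Fin (M + 1) → Matrix (Fin n) (Fin n) ℂ) :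
    ((pauliX ⊗ₖ (1 : Matrix (Fin n) (Fin n) ℂ)) * rhoF ρ A B V).trace
        = (((ρ * heisenberg V A * B).trace).re : ℂ) ∧
      ((pauliY ⊗ₖ (1 : Matrix (Fin n) (Fin n) ℂ)) * rhoF ρ A B V).trace
        = (((ρ * heisenberg V A * B).trace).im : ℂ) := by
  set z := (ρ * heisenberg V A * B).trace
  have h10 : (A * krausMap V (B * ((2 : ℂ)⁻¹ • ρ))).trace = z / 2 := by
    rw [trace_mul_krausMap, Matrix.mul_smul, Matrix.mul_smul, trace_smul, ← Matrix.mul_assoc,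
      trace_mul_cycle]
    simp [z, div_eq_inv_mul]
  have h01 : (krausMap V ((2 : ℂ)⁻¹ • ρ * B) * A).trace = starRingEnd ℂ z / 2 := by
    rw [trace_mul_comm, trace_mul_krausMap, Matrix.smul_mul, Matrix.mul_smul, trace_smul,
      ← Complex.star_def, ← trace_conjTranspose]
    simp only [conjTranspose_mul, hB.eq, (isHermitian_heisenberg V hA).eq, hρ.isHermitian.eq]
    rw [trace_mul_comm B, Matrix.mul_assoc, smul_eq_mul, div_eq_inv_mul]
  rw [rhoF_eq_blocks hA.eq hB.eq, trace_pauliX_kronecker_one_mul_blocks,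
    trace_pauliY_kronecker_one_mul_blocks]
  simp only [of_apply, cons_val', cons_val_zero, cons_val_one, empty_val', cons_val_fin_one]
  rw [h10, h01, Complex.re_eq_add_conj, Complex.im_eq_sub_conj]
  constructor
  · ring
  · rw [eq_div_iff (by simp)]
    linear_combination (starRingEnd ℂ z - z) * Complex.I_sq

/-- **The ancilla protocol measures the time correlator under TPCP dynamics.** -/
theorem ancilla_protocol_measures_correlator
    (ρ : Matrix (Fin n) (Fin n) ℂ) (hρ : ρ.PosSemidef) (hρ1 : ρ.trace = 1)
    (A B : Matrix (Fin n) (Fin n) ℂ)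
    (hA : A.IsHermitian) (hAu : A * A = 1)
    (hB : B.IsHermitian) (hBu : B * B = 1)
    (V : Fin (M + 1) → Matrix (Fin n) (Fin n) ℂ)
    (hKraus : ∑ m, (V m)ᴴ * V m = 1) :
    ((pauliX ⊗ₖ (1 : Matrix (Fin n) (Fin n) ℂ)) * rhoF ρ A B V).trace
        = (((ρ * heisenberg V A * B).trace).re : ℂ) ∧
      ((pauliY ⊗ₖ (1 : Matrix (Fin n) (Fin n) ℂ)) * rhoF ρ A B V).trace
        = (((ρ * heisenberg V A * B).trace).im : ℂ) :=
  ancilla_protocol_measures_correlator_general ρ hρ A B hA hB V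
end
end

section
/- (Binomial-expansion formula for the survival activity.) Let A ∈ M_n(ℂ) be positive definite with I − A positive semidefinite, and let ρ ∈ M_n(ℂ) be a density matrix. Then the sequence N ↦ ∑_{k=0}^{N} (−1)^k · binom(N+1, k+1) · Tr[ρ A^k] converges, as N → ∞, to Tr[ρ A^{−1}]. In particular, with A = V_0† V_0, the survival activity Ξ = Tr[ρ (V_0† V_0)^{−1}] − 1 equals lim_{N→∞} ∑_{k=0}^{N} (−1)^k binom(N+1, k+1) Tr[ρ (V_0† V_0)^k] − 1. -/
/-!
Since `A` commutes with `1`, the binomial theorem gives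
`A * ∑_{k ≤ N} (-1)^k C(N+1, k+1) A^k = 1 - (1 - A)^(N+1)`, so the `N`-th partial sum equals
`Tr[ρ A⁻¹ (1 - (1 - A)^(N+1))]`. The Hermitian matrix `1 - A` has its eigenvalues in `[0, 1)`
(they are `1 - λ` for the positive eigenvalues `λ` of `A`), hence its powers tend to `0` and the
partial sums tend to `Tr[ρ A⁻¹]`.
-/

open Matrix Finset Filter
open scoped ComplexOrder Pointwise

theorem mul_sum_neg_one_pow_choose_succ_smul_pow {S R : Type*} [CommRing S] [Ring R]
    [Algebra S R] (a : R) (N : ℕ) :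
    a * ∑ k ∈ range (N + 1), ((-1) ^ k * ((N + 1).choose (k + 1) : S)) • a ^ k =
      1 - (1 - a) ^ (N + 1) := by
  have hterm : ∀ k, (-a) ^ (k + 1) * ((N + 1).choose (k + 1) : R) =
      -(a * (((-1) ^ k * ((N + 1).choose (k + 1) : S)) • a ^ k)) := by
    intro k
    rw [Algebra.smul_def, map_mul, map_pow, map_neg, map_one, map_natCast, pow_succ',
      neg_pow a k, mul_assoc ((-1) ^ k), Nat.cast_comm]
    noncomm_ring
  have hbinom : (1 - a) ^ (N + 1) =
      1 - a * ∑ k ∈ range (N + 1), ((-1) ^ k * ((N + 1).choose (k + 1) : S)) • a ^ k := by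
    rw [sub_eq_neg_add 1 a, (Commute.one_right (-a)).add_pow, sum_range_succ']
    simp only [one_pow, mul_one, hterm, sum_neg_distrib, mul_sum, pow_zero,
      Nat.choose_zero_right, Nat.cast_one]
    abel
  rw [hbinom, sub_sub_cancel]

namespace Matrix

theorem sum_neg_one_pow_choose_succ_mul_trace_mul_pow {n R : Type*} [Fintype n]
    [DecidableEq n] [CommRing R] (ρ A : Matrix n n R) (hA : IsUnit A.det) (N : ℕ) :
    ∑ k ∈ range (N + 1), (-1) ^ k * ((N + 1).choose (k + 1) : R) * (ρ * A ^ k).trace =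
      (ρ * (A⁻¹ * (1 - (1 - A) ^ (N + 1)))).trace := by
  rw [← mul_sum_neg_one_pow_choose_succ_smul_pow (S := R)]
  simp only [nonsing_inv_mul_cancel_left (A := A) _ hA, mul_sum, trace_sum, mul_smul_comm,
    trace_smul, smul_eq_mul]

variable {n 𝕜 : Type*} [Fintype n] [DecidableEq n] [RCLike 𝕜]

theorem PosDef.eigenvalues_one_sub_lt_one {A : Matrix n n 𝕜} (hA : A.PosDef)
    (hB : (1 - A).IsHermitian) (i : n) : hB.eigenvalues i < 1 := by
  have hmem : hB.eigenvalues i ∈ ({1} : Set ℝ) - spectrum ℝ A := by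
    rw [spectrum.singleton_sub_eq, map_one]
    exact hB.eigenvalues_mem_spectrum_real i
  rw [hA.1.spectrum_real_eq_range_eigenvalues] at hmem
  obtain ⟨_, rfl, _, ⟨j, rfl⟩, hj⟩ := hmem
  linarith [hA.eigenvalues_pos j]

theorem IsHermitian.tendsto_pow_atTop_nhds_zero {B : Matrix n n 𝕜} (hB : B.IsHermitian)
    (h : ∀ i, |hB.eigenvalues i| < 1) : Tendsto (B ^ ·) atTop (nhds 0) := by
  set U : Matrix n n 𝕜 := (hB.eigenvectorUnitary : Matrix n n 𝕜)
  have hdiag : Tendsto (fun m : ℕ => diagonal ((RCLike.ofReal ∘ hB.eigenvalues : n → 𝕜) ^ m))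
      atTop (nhds (diagonal 0)) := by
    refine (continuous_id.matrix_diagonal.tendsto _).comp (tendsto_pi_nhds.2 fun i => ?_)
    refine tendsto_pow_atTop_nhds_zero_of_norm_lt_one ?_
    simpa using h i
  have hconj : Continuous fun M : Matrix n n 𝕜 => U * M * star U := by fun_prop
  have hlim := (hconj.tendsto _).comp hdiag
  rw [diagonal_zero', mul_zero, zero_mul] at hlim
  convert hlim using 2 with m
  conv_lhs => rw [hB.spectral_theorem, ← map_pow, diagonal_pow]
  rfl

end Matrix

theorem binomial_expansion_survival_activity_general {n : ℕ}
    (A : Matrix (Fin n) (Fin n) ℂ) (hA : A.PosDef) (hIA : (1 - A).PosSemidef)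
    (ρ : Matrix (Fin n) (Fin n) ℂ) :
    Tendsto
      (fun N : ℕ => ∑ k ∈ Finset.range (N + 1),
        (-1 : ℂ) ^ k * ((N + 1).choose (k + 1) : ℂ) * (ρ * A ^ k).trace)
      atTop (nhds ((ρ * A⁻¹).trace)) := by
  have hpow : Tendsto (fun N : ℕ => (1 - A) ^ (N + 1)) atTop (nhds 0) := by
    refine (hIA.1.tendsto_pow_atTop_nhds_zero fun i => ?_).comp (tendsto_add_atTop_nat 1)
    exact abs_lt.2 ⟨by linarith [hIA.eigenvalues_nonneg i], hA.eigenvalues_one_sub_lt_one _ i⟩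
  have hcont : Continuous fun M : Matrix (Fin n) (Fin n) ℂ => (ρ * (A⁻¹ * (1 - M))).trace := by
    fun_prop
  have hlim := hcont.tendsto 0
  rw [sub_zero, mul_one] at hlim
  simp_rw [sum_neg_one_pow_choose_succ_mul_trace_mul_pow ρ A hA.det_pos.ne'.isUnit]
  exact hlim.comp hpow

/-- **Binomial-expansion formula for the survival activity.** For a positive definite `A` with
`I − A` positive semidefinite and a density matrix `ρ`, the partial sums
`∑_{k=0}^{N} (−1)^k binom(N+1, k+1) Tr[ρ A^k]` converge to `Tr[ρ A⁻¹]` as `N → ∞`.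
(In particular, with `A = V_0† V_0` this computes the survival activity
`Ξ = Tr[ρ (V_0† V_0)⁻¹] − 1` as a limit of binomial sums.) -/
theorem binomial_expansion_survival_activity {n : ℕ}
    (A : Matrix (Fin n) (Fin n) ℂ) (hA : A.PosDef) (hIA : (1 - A).PosSemidef)
    (ρ : Matrix (Fin n) (Fin n) ℂ) (hρ : ρ.PosSemidef) (hρ1 : ρ.trace = 1) :
    Tendsto
      (fun N : ℕ => ∑ k ∈ Finset.range (N + 1),
        (-1 : ℂ) ^ k * ((N + 1).choose (k + 1) : ℂ) * (ρ * A ^ k).trace)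
      atTop (nhds ((ρ * A⁻¹).trace)) :=
  binomial_expansion_survival_activity_general A hA hIA ρ
end
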